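/- Let A = {a,b,c}, m ≥ 4 odd, and x₁, x₂, y₁, y₂ ≥ 1 with x₁ + x₂ = y₁ + y₂ = m - 3, x₁ even, and y₁ even. Then the two-sided infinite word of period 2(m-1) obtained by repeating (ab)^{(m-1)/2} (ac)^{(m-1)/2} avoids the set {b⋄^{m-2}b, c⋄^{m-2}c, a⋄^{m-2}b, a⋄^{m-2}c, a⋄^{x₁}a⋄^{x₂}a, b⋄^{y₁}c⋄^{y₂}c}. -/

import Mathlib

/-!
Put `n = m - 1`, which is even. In the word, `a` sits exactly at the even positions, and since
shifting by `n` moves between the two halves of the period, the odd positions `i` and `i + n`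
carry `b` and `c` in some order. Hence two letters at distance `m - 1` are either both `a` or
are `b` and `c`, which excludes the four patterns `x⋄^(m-2)y`. As `x₁ + 1` and `y₁ + 1` are odd,
the letter `x₁ + 1` places after an `a` is not `a`, and the letter `y₁ + 1` places after a `b`
is `a`, which excludes the other two.
-/

/-- The three-letter alphabet. -/
inductive ABC | a | b | c
deriving DecidableEq
open ABC

/-- A partial word of length `m` over alphabet `A`. -/
abbrev PW (m : ℕ) (A : Type) := Fin m → Option A

/-- A two-sided infinite word `w` meets a partial word `u`. -/
def Meets {m : ℕ} {A : Type} (w : ℤ → A) (u : PW m A) : Prop :=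
  ∃ i : ℤ, ∀ j : Fin m, ∀ x : A, u j = some x → w (i + (j : ℕ)) = x

/-- A set of partial words is unavoidable over `A`. -/
def Unavoidable {m : ℕ} {A : Type} (X : Set (PW m A)) : Prop :=
  ∀ w : ℤ → A, ∃ u ∈ X, Meets w u

/-- A set of partial words is avoidable over `A`. -/
def Avoidable {m : ℕ} {A : Type} (X : Set (PW m A)) : Prop :=
  ∃ w : ℤ → A, ∀ u ∈ X, ¬ Meets w u

/-- The partial word `x ⋄^(m-2) y` of length `m`: first letter `x`, last letter `y`,
holes in between. -/
def oneHole {A : Type} (m : ℕ) (x y : A) : PW m A :=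
  fun j => if (j : ℕ) = 0 then some x else if (j : ℕ) = m - 1 then some y else none

/-- The partial word `x ⋄^(p-1) d ⋄^(m-p-2) y` of length `m`: first letter `x`,
letter `d` at position `p`, last letter `y`, holes elsewhere. -/
def twoDef {A : Type} (m : ℕ) (x d y : A) (p : ℕ) : PW m A :=
  fun j => if (j : ℕ) = 0 then some x else if (j : ℕ) = p then some d
    else if (j : ℕ) = m - 1 then some y else none

/-- The two-sided infinite word of period `P` repeating the block `f` (given on `[0, P)`). -/
def periodic {A : Type} (P : ℕ) (f : ℕ → A) : ℤ → A :=
  fun i => f ((i % (P : ℤ)).toNat)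

namespace ABC

def swapBC : ABC → ABC
  | a => a
  | b => c
  | c => b

end ABC

section Meets

variable {m p : ℕ} {A : Type} {w : ℤ → A} {x d y : A}

lemma Meets.exists_of_oneHole (hm : 2 ≤ m) (h : Meets w (oneHole m x y)) :
    ∃ i, w i = x ∧ w (i + (m - 1 : ℕ)) = y := by
  obtain ⟨i, hi⟩ := h
  refine ⟨i, by simpa using hi ⟨0, by omega⟩ x (by simp [oneHole]),
    hi ⟨m - 1, by omega⟩ y ?_⟩
  simp only [oneHole, if_neg (show m - 1 ≠ 0 by omega), if_true]

lemma Meets.exists_of_twoDef (hp : 0 < p) (hpm : p < m) (h : Meets w (twoDef m x d y p)) :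
    ∃ i, w i = x ∧ w (i + p) = d := by
  obtain ⟨i, hi⟩ := h
  refine ⟨i, by simpa using hi ⟨0, by omega⟩ x (by simp [twoDef]),
    hi ⟨p, hpm⟩ d ?_⟩
  simp only [twoDef, if_neg hp.ne', if_true]

lemma not_meets_oneHole {f : A → A} (hm : 2 ≤ m) (hw : ∀ i, w (i + (m - 1 : ℕ)) = f (w i))
    (hxy : y ≠ f x) : ¬ Meets w (oneHole m x y) := by
  intro h
  obtain ⟨i, rfl, rfl⟩ := h.exists_of_oneHole hm
  exact hxy (hw i)

lemma not_meets_twoDef (hp : 0 < p) (hpm : p < m) (hw : ∀ i, w i = x → w (i + p) ≠ d) :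
    ¬ Meets w (twoDef m x d y p) := by
  intro h
  obtain ⟨i, hi, hip⟩ := h.exists_of_twoDef hp hpm
  exact hw i hi hip

end Meets

lemma Int.add_emod_two_mul_lt_iff {i n : ℤ} (hn : 0 < n) :
    (i + n) % (2 * n) < n ↔ n ≤ i % (2 * n) := by
  have hr₀ : 0 ≤ i % (2 * n) := Int.emod_nonneg _ (by omega)
  have hr₁ : i % (2 * n) < 2 * n := Int.emod_lt_of_pos _ (by omega)
  have hshift : (i + n) % (2 * n) = (i % (2 * n) + n) % (2 * n) := by
    rw [Int.add_emod, Int.emod_eq_of_lt (a := n) hn.le (by omega)]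
  rw [hshift]
  by_cases hr : i % (2 * n) < n
  · rw [Int.emod_eq_of_lt (by omega) (by omega)]
    omega
  · rw [show i % (2 * n) + n = i % (2 * n) - n + 2 * n by ring, ← Int.emod_eq_add_self_emod,
      Int.emod_eq_of_lt (by omega) (by omega)]
    omega

def abacBlock (n k : ℕ) : ABC :=
  if k < n then (if k % 2 = 0 then a else b) else (if (k - n) % 2 = 0 then a else c)

def abacWord (n : ℕ) : ℤ → ABC := periodic (2 * n) (abacBlock n)

section abacWord

variable {n : ℕ} (hn : Even n) (hpos : 0 < n)
include hn hpos

lemma abacWord_apply (i : ℤ) :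
    abacWord n i = if Even i then a else if i % (2 * n) < n then b else c := by
  have hr₀ : 0 ≤ i % (2 * n : ℕ) := Int.emod_nonneg _ (by omega)
  have hr₁ : i % (2 * n : ℕ) < 2 * n := Int.emod_lt_of_pos _ (by omega)
  have hpar : i % (2 * n : ℕ) % 2 = i % 2 :=
    Int.emod_emod_of_dvd i (by exact_mod_cast dvd_mul_right 2 n)
  obtain ⟨k, rfl⟩ := hn
  simp only [abacWord, periodic, abacBlock, Int.even_iff]
  push_cast at *
  split_ifs <;> first | rfl | omega

lemma abacWord_eq_a_iff (i : ℤ) : abacWord n i = a ↔ Even i := by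
  rw [abacWord_apply hn hpos]
  split_ifs <;> simp_all

lemma abacWord_add (i : ℤ) : abacWord n (i + n) = (abacWord n i).swapBC := by
  have hflip := Int.add_emod_two_mul_lt_iff (i := i) (n := n) (by omega)
  have hpar : Even (i + n) ↔ Even i := by
    rw [Int.even_add]; exact_mod_cast iff_true_right hn
  simp only [abacWord_apply hn hpos, hpar]
  split_ifs <;> first | rfl | omega

end abacWord

theorem stmt_11_general (m x₁ x₂ y₁ y₂ : ℕ) (hm : 4 ≤ m) (hmo : Odd m)
    (hsx : x₁ + x₂ = m - 3) (hsy : y₁ + y₂ = m - 3)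
    (hxe : Even x₁) (hye : Even y₁) :
    ∀ u ∈ ({oneHole m b b, oneHole m c c, oneHole m a b, oneHole m a c,
            twoDef m a a a (x₁ + 1), twoDef m b c c (y₁ + 1)} : Set (PW m ABC)),
      ¬ Meets (periodic (2 * (m - 1)) (fun n =>
        if n < m - 1 then (if n % 2 = 0 then a else b)
        else (if (n - (m - 1)) % 2 = 0 then a else c))) u := by
  change ∀ u ∈ _, ¬ Meets (abacWord (m - 1)) u
  have hn : Even (m - 1) := by obtain ⟨k, rfl⟩ := hmo; simp
  have hpos : 0 < m - 1 := by omega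
  have hshift := abacWord_add hn hpos
  have ha_iff := abacWord_eq_a_iff hn hpos
  have hodd_x : Odd ((x₁ + 1 : ℕ) : ℤ) := by exact_mod_cast hxe.add_one
  have hodd_y : Odd ((y₁ + 1 : ℕ) : ℤ) := by exact_mod_cast hye.add_one
  simp only [Set.mem_insert_iff, Set.mem_singleton_iff]
  rintro u (rfl | rfl | rfl | rfl | rfl | rfl)
  iterate 4 exact not_meets_oneHole (by omega) hshift (by decide)
  · refine not_meets_twoDef (by omega) (by omega) fun i hi hip => ?_
    rw [ha_iff] at hi hip
    exact (Int.not_even_iff_odd.mpr (hi.add_odd hodd_x)) hip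
  · refine not_meets_twoDef (by omega) (by omega) fun i hi hip => ?_
    have hi_odd : Odd i := Int.not_even_iff_odd.mp fun h => by simp [(ha_iff i).mpr h] at hi
    rw [(ha_iff _).mpr (hi_odd.add_odd hodd_y)] at hip
    cases hip

/-- For m odd, x₁ even, y₁ even, the word repeating (ab)^((m-1)/2) (ac)^((m-1)/2) avoids
{b⋄^(m-2)b, c⋄^(m-2)c, a⋄^(m-2)b, a⋄^(m-2)c, a⋄^(x₁)a⋄^(x₂)a, b⋄^(y₁)c⋄^(y₂)c}. -/
theorem stmt_11 (m x₁ x₂ y₁ y₂ : ℕ) (hm : 4 ≤ m) (hmo : Odd m)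
    (hx₁ : 1 ≤ x₁) (hx₂ : 1 ≤ x₂) (hy₁ : 1 ≤ y₁) (hy₂ : 1 ≤ y₂)
    (hsx : x₁ + x₂ = m - 3) (hsy : y₁ + y₂ = m - 3)
    (hxe : Even x₁) (hye : Even y₁) :
    ∀ u ∈ ({oneHole m b b, oneHole m c c, oneHole m a b, oneHole m a c,
            twoDef m a a a (x₁ + 1), twoDef m b c c (y₁ + 1)} : Set (PW m ABC)),
      ¬ Meets (periodic (2 * (m - 1)) (fun n =>
        if n < m - 1 then (if n % 2 = 0 then a else b)
        else (if (n - (m - 1)) % 2 = 0 then a else c))) u :=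
  stmt_11_general m x₁ x₂ y₁ y₂ hm hmo hsx hsy hxe hye
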